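/- arXiv:2006.03756 — 5 statements merged into one kernel-verified Lean document; each statement's English description precedes it below -/
import Mathlib

section
/- Let k ≥ 2 and let G be a K_k-free graph. Let K be a copy of K_{k−1} in G and let Y be a clique of G vertex-disjoint from K. Then the bipartite 'non-adjacency' graph between Y and V(K) (where y∈Y and x∈K are joined iff yx is not an edge of G) contains a matching saturating Y. -/
open SimpleGraph Finset

/-!
By Hall's theorem it suffices that every `Y' ⊆ Y` has at least `|Y'|` vertices of `K` that are
non-adjacent to some vertex of `Y'`. Otherwise `Y'` together with the remaining vertices of `K`,
which are adjacent to all of `Y'`, is a clique on at least `|Y'| + (k - 1) - (|Y'| - 1) = k`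
vertices.
-/

namespace SimpleGraph

variable {V : Type*} {G : SimpleGraph V}

theorem IsClique.card_lt_of_cliqueFree {n : ℕ} {s : Finset V} (hs : G.IsClique (s : Set V))
    (h : G.CliqueFree n) : #s < n := by
  by_contra! hn
  obtain ⟨u, hus, hu⟩ := exists_subset_card_eq hn
  exact h u ⟨IsClique.subset (by exact_mod_cast hus) hs, hu⟩

section NonNeighbors

variable [DecidableRel G.Adj]

variable (G) in
def nonNeighborsIn (K : Finset V) (y : V) : Finset V := {x ∈ K | ¬ G.Adj y x}

variable [DecidableEq V]

theorem biUnion_nonNeighborsIn_subset (K Y : Finset V) : Y.biUnion (G.nonNeighborsIn K) ⊆ K :=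
  biUnion_subset.2 fun _ _ => filter_subset _ _

/-- `Y` together with the vertices of `K` adjacent to all of `Y` is a clique, and the union is
disjoint since a vertex of `Y ∩ K` is non-adjacent to itself. -/
theorem card_add_card_lt_add_card_biUnion_nonNeighborsIn {k : ℕ} (hfree : G.CliqueFree k)
    {K Y : Finset V} (hK : G.IsClique (K : Set V)) (hY : G.IsClique (Y : Set V)) :
    #Y + #K < k + #(Y.biUnion (G.nonNeighborsIn K)) := by
  set N := Y.biUnion (G.nonNeighborsIn K)
  have hNK : N ⊆ K := biUnion_nonNeighborsIn_subset K Y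
  have hadj : ∀ y ∈ Y, ∀ x ∈ K \ N, G.Adj y x := by
    intro y hy x hx
    by_contra hyx
    exact (mem_sdiff.1 hx).2 (mem_biUnion.2 ⟨y, hy, mem_filter.2 ⟨(mem_sdiff.1 hx).1, hyx⟩⟩)
  have hdisj : Disjoint Y (K \ N) :=
    Finset.disjoint_left.2 fun y hy hyK => G.irrefl (hadj y hy y hyK)
  have hclique : G.IsClique ((Y ∪ K \ N : Finset V) : Set V) := by
    rw [coe_union]
    exact Set.pairwise_union.2 ⟨hY, IsClique.subset (by simp) hK,
      fun y hy x hx _ => ⟨hadj y hy x hx, (hadj y hy x hx).symm⟩⟩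
  have hcard := hclique.card_lt_of_cliqueFree hfree
  rw [card_union_of_disjoint hdisj, card_sdiff_of_subset hNK] at hcard
  have := card_le_card hNK
  omega

theorem card_le_card_biUnion_nonNeighborsIn {k : ℕ} (hfree : G.CliqueFree k) {K Y : Finset V}
    (hK : G.IsNClique (k - 1) K) (hY : G.IsClique (Y : Set V)) :
    #Y ≤ #(Y.biUnion (G.nonNeighborsIn K)) := by
  have hlt := card_add_card_lt_add_card_biUnion_nonNeighborsIn hfree hK.isClique hY
  have hle := card_le_card (biUnion_nonNeighborsIn_subset (G := G) K Y)
  rw [hK.card_eq] at hlt hle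
  omega

end NonNeighbors

end SimpleGraph

theorem nonadjacency_matching_saturating_clique_general {V : Type*} (G : SimpleGraph V) (k : ℕ)
    (hfree : G.CliqueFree k) (K Y : Finset V)
    (hK : G.IsNClique (k - 1) K) (hY : G.IsClique (Y : Set V)) :
    ∃ f : V → V, Set.InjOn f (Y : Set V) ∧
      ∀ y ∈ Y, f y ∈ K ∧ ¬ G.Adj y (f y) := by
  classical
  have hall : ∀ s : Finset Y, #s ≤ #(s.biUnion fun y => G.nonNeighborsIn K y) := by
    intro s
    have hs : G.IsClique ((s.image Subtype.val : Finset V) : Set V) := by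
      refine IsClique.subset ?_ hY
      rw [coe_image, Set.image_subset_iff]
      exact fun y _ => y.2
    have := card_le_card_biUnion_nonNeighborsIn hfree hK hs
    rwa [card_image_of_injective s Subtype.val_injective, image_biUnion] at this
  obtain ⟨f, hf_inj, hf⟩ := (all_card_le_biUnion_card_iff_exists_injective _).mp hall
  refine ⟨Function.extend Subtype.val f id, ?_, fun y hy => ?_⟩
  · intro a ha b hb hab
    rw [Subtype.val_injective.extend_apply f id ⟨a, ha⟩,
      Subtype.val_injective.extend_apply f id ⟨b, hb⟩] at hab
    exact congrArg Subtype.val (hf_inj hab)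
  · rw [Subtype.val_injective.extend_apply f id ⟨y, hy⟩]
    exact mem_filter.1 (hf ⟨y, hy⟩)

/-- In a `K_k`-free graph `G`, if `K` is a clique of size `k - 1` and `Y` is a clique
vertex-disjoint from `K`, then the bipartite "non-adjacency" graph between `Y` and `K`
has a matching saturating `Y`: there is an injective map `f` from `Y` into `K` with
`y` non-adjacent to `f y` for every `y ∈ Y`. -/
theorem nonadjacency_matching_saturating_clique {V : Type*} (G : SimpleGraph V) (k : ℕ)
    (hk : 2 ≤ k) (hfree : G.CliqueFree k) (K Y : Finset V)
    (hK : G.IsNClique (k - 1) K) (hY : G.IsClique (Y : Set V)) (hdisj : Disjoint K Y) :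
    ∃ f : V → V, Set.InjOn f (Y : Set V) ∧
      ∀ y ∈ Y, f y ∈ K ∧ ¬ G.Adj y (f y) :=
  nonadjacency_matching_saturating_clique_general G k hfree K Y hK hY
end

section
/- The number of homomorphic walks with l−1 edges in a graph G on n vertices is at most μ^{l−1}·n, where μ is the largest eigenvalue of the adjacency matrix of G; consequently the number of paths P_l in G is at most μ^{l−1}·n/2. -/
open SimpleGraph

/-- Number of (unlabeled) subgraph copies of `H` in `G`. -/
noncomputable def copyCount {α β : Type*} [Fintype β] (H : SimpleGraph α) (G : SimpleGraph β) : ℕ :=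
  {G' : G.Subgraph | Nonempty (G'.coe ≃g H)}.ncard

/-!
Expand the all-ones vector in an orthonormal eigenbasis `(vⱼ)` of `A = A(G)`: the number of walks
with `k` edges is `𝟙 ⬝ Aᵏ 𝟙 = ∑ λⱼᵏ cⱼ²` with `∑ cⱼ² = ‖𝟙‖² = n`. As `A` is entrywise nonnegative,
`|λⱼ| = |vⱼ ⬝ A vⱼ| ≤ |vⱼ| ⬝ A |vⱼ| ≤ μ`, hence the sum is at most `μᵏ n`. A copy of `P_l` is
traversed from either end by a walk with `l - 1` edges, and the walk determines the copy and the
end it starts from, which gives the bound on paths.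
-/

open Matrix

lemma OrthonormalBasis.sum_repr_sq {ι E : Type*} [Fintype ι] [NormedAddCommGroup E]
    [InnerProductSpace ℝ E] (B : OrthonormalBasis ι ℝ E) (x : E) :
    ∑ j, B.repr x j ^ 2 = ‖x‖ ^ 2 := by
  rw [← EuclideanSpace.real_norm_sq_eq, B.repr.norm_map]

lemma EuclideanSpace.real_norm_sq_eq_dotProduct {ι : Type*} [Fintype ι]
    (x : EuclideanSpace ℝ ι) : ‖x‖ ^ 2 = ⇑x ⬝ᵥ ⇑x := by
  rw [EuclideanSpace.real_norm_sq_eq]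
  simp [dotProduct, sq]

namespace Matrix

variable {ι : Type*} [Fintype ι]

lemma abs_dotProduct_mulVec_le_of_nonneg {A : Matrix ι ι ℝ} (hA : ∀ i j, 0 ≤ A i j)
    (x : ι → ℝ) : |x ⬝ᵥ (A *ᵥ x)| ≤ |x| ⬝ᵥ (A *ᵥ |x|) := by
  simp only [dotProduct, mulVec, Finset.mul_sum]
  refine (Finset.abs_sum_le_sum_abs _ _).trans <| Finset.sum_le_sum fun i _ =>
    (Finset.abs_sum_le_sum_abs _ _).trans_eq <| Finset.sum_congr rfl fun j _ => ?_
  simp only [abs_mul, abs_of_nonneg (hA i j), Pi.abs_apply]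

end Matrix

namespace Matrix.IsHermitian

variable {ι : Type*} [Fintype ι] [DecidableEq ι] {A : Matrix ι ι ℝ} (hA : A.IsHermitian)

lemma pow_mulVec_eigenvectorBasis (k : ℕ) (j : ι) :
    A ^ k *ᵥ ⇑(hA.eigenvectorBasis j) = hA.eigenvalues j ^ k • ⇑(hA.eigenvectorBasis j) := by
  induction k with
  | zero => simp
  | succ k ih =>
    rw [pow_succ', ← mulVec_mulVec, ih, mulVec_smul, hA.mulVec_eigenvectorBasis, smul_smul,
      pow_succ]

lemma dotProduct_pow_mulVec (k : ℕ) (x : ι → ℝ) :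
    x ⬝ᵥ (A ^ k *ᵥ x) =
      ∑ j, hA.eigenvalues j ^ k * hA.eigenvectorBasis.repr (WithLp.toLp 2 x) j ^ 2 := by
  set B := hA.eigenvectorBasis
  set c := B.repr (WithLp.toLp 2 x)
  have hx : x = ∑ j, c j • ⇑(B j) := by
    simpa [c, WithLp.ofLp_sum] using congrArg WithLp.ofLp (B.sum_repr (WithLp.toLp 2 x)).symm
  have hc : ∀ j, x ⬝ᵥ ⇑(B j) = c j := fun j => by
    simp [c, B.repr_apply_apply, PiLp.inner_apply, dotProduct]
  have hy : A ^ k *ᵥ x = ∑ j, (c j * hA.eigenvalues j ^ k) • ⇑(B j) := by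
    conv_lhs => rw [hx]
    simp only [mulVec_sum, mulVec_smul, hA.pow_mulVec_eigenvectorBasis, smul_smul, B]
  simp only [hy, dotProduct_sum, dotProduct_smul, hc, smul_eq_mul]
  exact Finset.sum_congr rfl fun j _ => by ring

lemma dotProduct_pow_mulVec_le {k : ℕ} {c : ℝ} (hc : ∀ j, hA.eigenvalues j ^ k ≤ c)
    (x : ι → ℝ) : x ⬝ᵥ (A ^ k *ᵥ x) ≤ c * (x ⬝ᵥ x) := by
  rw [hA.dotProduct_pow_mulVec, ← EuclideanSpace.real_norm_sq_eq_dotProduct (WithLp.toLp 2 x),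
    ← OrthonormalBasis.sum_repr_sq hA.eigenvectorBasis, Finset.mul_sum]
  exact Finset.sum_le_sum fun j _ => mul_le_mul_of_nonneg_right (hc j) (sq_nonneg _)

variable {μ : ℝ}

lemma abs_eigenvalues_le_of_nonneg (hnonneg : ∀ i j, 0 ≤ A i j)
    (hmax : ∀ j, hA.eigenvalues j ≤ μ) (j : ι) : |hA.eigenvalues j| ≤ μ := by
  set v := ⇑(hA.eigenvectorBasis j)
  have hv : v ⬝ᵥ v = 1 := by
    rw [← EuclideanSpace.real_norm_sq_eq_dotProduct, hA.eigenvectorBasis.orthonormal.1 j, one_pow]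
  have habs : |v| ⬝ᵥ |v| = 1 := by
    simpa only [dotProduct, Pi.abs_apply, abs_mul_abs_self] using hv
  calc |hA.eigenvalues j| = |v ⬝ᵥ (A *ᵥ v)| := by
        rw [hA.mulVec_eigenvectorBasis, dotProduct_smul, hv, smul_eq_mul, mul_one]
    _ ≤ |v| ⬝ᵥ (A *ᵥ |v|) := abs_dotProduct_mulVec_le_of_nonneg hnonneg v
    _ ≤ μ * (|v| ⬝ᵥ |v|) := by
        simpa only [pow_one] using hA.dotProduct_pow_mulVec_le (k := 1) (by simpa using hmax) |v|
    _ = μ := by rw [habs, mul_one]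

lemma sum_pow_apply_le_of_nonneg (hnonneg : ∀ i j, 0 ≤ A i j) (hmax : ∀ j, hA.eigenvalues j ≤ μ)
    (k : ℕ) : ∑ u, ∑ v, (A ^ k) u v ≤ μ ^ k * Fintype.card ι := by
  have hc (j : ι) : hA.eigenvalues j ^ k ≤ μ ^ k :=
    calc hA.eigenvalues j ^ k ≤ |hA.eigenvalues j| ^ k := by rw [← abs_pow]; exact le_abs_self _
      _ ≤ μ ^ k :=
        pow_le_pow_left₀ (abs_nonneg _) (hA.abs_eigenvalues_le_of_nonneg hnonneg hmax j) k
  simpa [dotProduct, mulVec] using hA.dotProduct_pow_mulVec_le hc 1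

end Matrix.IsHermitian

namespace SimpleGraph

def pathGraph.walkToZero {n : ℕ} :
    (d : ℕ) → (hd : d < n) → (pathGraph n).Walk ⟨d, hd⟩ ⟨0, by omega⟩
  | 0, _ => .nil
  | d + 1, hd => .cons (pathGraph_adj.mpr (Or.inr rfl)) (walkToZero d (by omega))

namespace pathGraph

lemma length_walkToZero {n d : ℕ} (hd : d < n) : (walkToZero d hd).length = d := by
  induction d with
  | zero => rfl
  | succ d ih => simp [walkToZero, ih]

lemma getVert_walkToZero {n d : ℕ} (hd : d < n) (i : ℕ) :
    (walkToZero d hd).getVert i = ⟨d - i, by omega⟩ := by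
  induction d generalizing i with
  | zero => simp [walkToZero]
  | succ d ih =>
    cases i with
    | zero => rfl
    | succ i => simp [walkToZero, ih]

lemma toSubgraph_walkToZero (m : ℕ) : (walkToZero m (Nat.lt_succ_self m)).toSubgraph = ⊤ := by
  ext u v
  · simp only [Subgraph.verts_top, Set.mem_univ, iff_true, Walk.mem_verts_toSubgraph]
    convert Walk.getVert_mem_support _ (m - u)
    rw [getVert_walkToZero]
    ext; simp only; omega
  · refine ⟨fun h => h.adj_sub, fun h => ?_⟩
    rw [Subgraph.top_adj, pathGraph_adj] at h
    simp only [Walk.toSubgraph_adj_iff, getVert_walkToZero, length_walkToZero]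
    rcases h with h | h
    · refine ⟨m - v, ?_, by omega⟩
      rw [Sym2.eq_swap]
      congr 1 <;> ext <;> simp only <;> omega
    · refine ⟨m - u, ?_, by omega⟩
      congr 1 <;> ext <;> simp only <;> omega

end pathGraph

variable {α V : Type*} {H : SimpleGraph α} {G : SimpleGraph V}

lemma Walk.toSubgraph_map_comp_symm {a b : α} {w : H.Walk a b} (hw : w.toSubgraph = ⊤)
    {c : G.Subgraph} (e : c.coe ≃g H) :
    (w.map (c.hom.comp e.symm.toHom)).toSubgraph = c := by
  rw [Walk.toSubgraph_map, hw, Subgraph.map_comp, Subgraph.map_iso_top, Subgraph.map_hom_top]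

lemma two_mul_ncard_subgraph_iso_le_card_walks [Fintype V] [DecidableEq V] [DecidableRel G.Adj]
    {a b : α} (hab : a ≠ b) (w : H.Walk a b) (hw : w.toSubgraph = ⊤) :
    2 * {c : G.Subgraph | Nonempty (c.coe ≃g H)}.ncard ≤
      ∑ u, ∑ v, Fintype.card {p : G.Walk u v // p.length = w.length} := by
  let Copies := {c : G.Subgraph | Nonempty (c.coe ≃g H)}
  let f (c : Copies) : H →g G := c.1.hom.comp c.2.some.symm.toHom
  have hf (c : Copies) : f c a ≠ f c b := fun h =>
    hab (c.2.some.symm.injective (Subtype.ext h))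
  let walkOf (c : Copies) : G.Walk (f c a) (f c b) := w.map (f c)
  let enc : Copies × Bool → Σ u v, {p : G.Walk u v // p.length = w.length}
    | (c, true) => ⟨_, _, walkOf c, w.length_map _⟩
    | (c, false) => ⟨_, _, (walkOf c).reverse, by simp [walkOf]⟩
  have hsub (c : Copies) (s : Bool) : (enc (c, s)).2.2.1.toSubgraph = c.1 := by
    cases s <;> simp only [enc, Walk.toSubgraph_reverse] <;>
      exact Walk.toSubgraph_map_comp_symm hw _
  have henc : Function.Injective enc := by
    rintro ⟨c, s⟩ ⟨c', s'⟩ h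
    obtain rfl : c = c' := Subtype.ext <| by rw [← hsub c s, ← hsub c' s', h]
    cases s <;> cases s' <;> simp only [enc, Sigma.mk.injEq] at h ⊢
    · exact (hf c h.1.symm).elim
    · exact (hf c h.1).elim
  calc 2 * Copies.ncard = Nat.card (Copies × Bool) := by
        rw [Nat.card_prod, Nat.card_eq_fintype_card (α := Bool), Fintype.card_bool, mul_comm]; rfl
    _ ≤ Nat.card (Σ u v, {p : G.Walk u v // p.length = w.length}) :=
        Nat.card_le_card_of_injective enc henc
    _ = _ := by simp only [Nat.card_eq_fintype_card, Fintype.card_sigma]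

end SimpleGraph

theorem walks_le_spectralRadius_pow_general (n l : ℕ) (hl : 2 ≤ l) (G : SimpleGraph (Fin n))
    [DecidableRel G.Adj] (hA : (G.adjMatrix ℝ).IsHermitian) (μ : ℝ)
    (hmax : ∀ i, hA.eigenvalues i ≤ μ) :
    ((∑ u : Fin n, ∑ v : Fin n,
        Fintype.card {p : G.Walk u v // p.length = l - 1} : ℕ) : ℝ) ≤ μ ^ (l - 1) * n ∧
      (_root_.copyCount (pathGraph l) G : ℝ) ≤ μ ^ (l - 1) * n / 2 := by
  obtain ⟨m, rfl⟩ : ∃ m, l = m + 1 := ⟨l - 1, by omega⟩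
  rw [Nat.add_sub_cancel]
  have hnonneg (i j : Fin n) : 0 ≤ G.adjMatrix ℝ i j := by
    rw [adjMatrix_apply]; split_ifs <;> norm_num
  have hwalks : ((∑ u, ∑ v, Fintype.card {p : G.Walk u v // p.length = m} : ℕ) : ℝ) ≤
      μ ^ m * n := by
    calc _ = ∑ u, ∑ v, (G.adjMatrix ℝ ^ m) u v := by
          push_cast
          simp_rw [adjMatrix_pow_apply_eq_card_walk]
          rfl
      _ ≤ μ ^ m * Fintype.card (Fin n) := hA.sum_pow_apply_le_of_nonneg hnonneg hmax m
      _ = μ ^ m * n := by rw [Fintype.card_fin]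
  have hpaths : 2 * _root_.copyCount (pathGraph (m + 1)) G ≤
      ∑ u, ∑ v, Fintype.card {p : G.Walk u v // p.length = m} := by
    have h := two_mul_ncard_subgraph_iso_le_card_walks (G := G)
      (Fin.ne_of_val_ne (by simp only; omega)) _ (pathGraph.toSubgraph_walkToZero m)
    rwa [pathGraph.length_walkToZero] at h
  refine ⟨hwalks, ?_⟩
  have hpaths_real := (Nat.cast_le (α := ℝ)).mpr hpaths
  rw [Nat.cast_mul, Nat.cast_ofNat] at hpaths_real
  linarith

/-- If `μ` is the largest eigenvalue of the adjacency matrix of an `n`-vertex graph `G`,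
then the number of walks with `l - 1` edges in `G` is at most `μ^(l-1) * n`; consequently,
the number of copies of the path `P_l` in `G` is at most `μ^(l-1) * n / 2`. -/
theorem walks_le_spectralRadius_pow (n l : ℕ) (hl : 2 ≤ l) (G : SimpleGraph (Fin n))
    [DecidableRel G.Adj] (hA : (G.adjMatrix ℝ).IsHermitian) (μ : ℝ)
    (hmax : ∀ i, hA.eigenvalues i ≤ μ) (hmem : ∃ i, hA.eigenvalues i = μ) :
    ((∑ u : Fin n, ∑ v : Fin n,
        Fintype.card {p : G.Walk u v // p.length = l - 1} : ℕ) : ℝ) ≤ μ ^ (l - 1) * n ∧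
      (_root_.copyCount (pathGraph l) G : ℝ) ≤ μ ^ (l - 1) * n / 2 :=
  walks_le_spectralRadius_pow_general n l hl G hA μ hmax
end

section
/- Let F be a graph and k ≥ 2. Suppose G_0 is a complete bipartite graph on n vertices with N(P_{2k}, G_0) = ex(n, P_{2k}, F). Then N(C_{2k}, G_0) = ex(n, C_{2k}, F). -/
open SimpleGraph

/-- The generalized Turán number `ex(n, H, F)`. -/
noncomputable def exNum {α γ : Type*} (n : ℕ) (H : SimpleGraph α) (F : SimpleGraph γ) : ℕ :=
  sSup {m | ∃ G : SimpleGraph (Fin n), copyCount F G = 0 ∧ copyCount H G = m}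

/-!
Deleting one of its `2k` edges turns a copy of `C_{2k}` into a copy of `P_{2k}`, and different
pairs (cycle, edge) give different paths: in the path, the deleted edge joins the only two
vertices with a single neighbour, and the cycle is the path plus that edge. Hence
`2k · N(C_{2k}, G) ≤ N(P_{2k}, G)` for every graph `G`, with equality when `G` is complete
bipartite, because the two ends of a path on an even number of vertices lie in different parts
and are therefore adjacent. For `F`-free `G` this gives
`2k · N(C_{2k}, G) ≤ ex(n, P_{2k}, F) = N(P_{2k}, G₀) = 2k · N(C_{2k}, G₀)`.
-/

open Function

namespace SimpleGraph

section CycleGraph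
variable {m : ℕ} [NeZero m]

lemma cycleGraph_adj_add_right (a b r : Fin m) :
    (cycleGraph m).Adj (a + r) (b + r) ↔ (cycleGraph m).Adj a b := by
  simp only [cycleGraph_adj', add_sub_add_right_eq_sub]

def cycleGraphRotate (r : Fin m) : cycleGraph m ≃g cycleGraph m :=
  ⟨Equiv.addRight r, cycleGraph_adj_add_right _ _ r⟩

lemma cycleGraph_adj_neg_one_zero (hm : 2 ≤ m) : (cycleGraph m).Adj (-1) 0 := by
  refine cycleGraph_adj'.mpr (Or.inr ?_)
  rw [sub_neg_eq_add, zero_add, Fin.val_one', Nat.mod_eq_of_lt (by omega)]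

lemma exists_eq_sub_one_of_cycleGraph_adj {a b : Fin m} (h : (cycleGraph m).Adj a b) :
    ∃ r : Fin m, s(a, b) = s(r - 1, r) := by
  have eq_sub_one : ∀ x y : Fin m, ((x - y : Fin m) : ℕ) = 1 → y = x - 1 := fun x y hxy => by
    have hm := (x - y).isLt
    have hsub : x - y = 1 := Fin.ext (by rw [hxy, Fin.val_one', Nat.mod_eq_of_lt (by omega)])
    rw [← hsub, sub_sub_cancel]
  rcases cycleGraph_adj'.mp h with h | h
  · exact ⟨a, by rw [eq_sub_one a b h, Sym2.eq_swap]⟩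
  · exact ⟨b, by rw [eq_sub_one b a h]⟩

lemma cycleGraph_deleteEdges_eq_pathGraph (hm : 3 ≤ m) :
    (cycleGraph m).deleteEdges {s(-1, 0)} = pathGraph m := by
  ext a b
  simp only [deleteEdges_adj, cycleGraph_adj', pathGraph_adj, Set.mem_singleton_iff, Sym2.eq_iff,
    Fin.ext_iff]
  grind [Fin.sub_val_of_le, Fin.coe_sub_iff_lt]

lemma ncard_neighborSet_cycleGraph (hm : 3 ≤ m) (a : Fin m) :
    ((cycleGraph m).neighborSet a).ncard = 2 := by
  obtain ⟨n, rfl⟩ : ∃ n, m = n + 3 := ⟨m - 3, by omega⟩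
  rw [← Nat.card_coe_set_eq, Nat.card_eq_fintype_card, card_neighborSet_eq_degree,
    cycleGraph_degree_three_le]

lemma ncard_edgeSet_cycleGraph (hm : 3 ≤ m) : (cycleGraph m).edgeSet.ncard = m := by
  classical
  obtain ⟨n, rfl⟩ : ∃ n, m = n + 3 := ⟨m - 3, by omega⟩
  have handshake := sum_degrees_eq_twice_card_edges (cycleGraph (n + 3))
  simp only [cycleGraph_degree_three_le, Finset.sum_const, Finset.card_univ, Fintype.card_fin,
    smul_eq_mul] at handshake
  rw [← coe_edgeFinset, Set.ncard_coe_finset]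
  omega

end CycleGraph

lemma pathGraph_hom_color_eq_iff_even {β : Type*} {G : SimpleGraph β} {n : ℕ} {c : β → Bool}
    (hc : ∀ x y, G.Adj x y → c x ≠ c y) (f : pathGraph (n + 1) →g G) (i : Fin (n + 1)) :
    c (f i) = c (f 0) ↔ Even (i : ℕ) := by
  induction i using Fin.induction with
  | zero => simp
  | succ i ih =>
    have hne := hc _ _ (f.map_adj (pathGraph_adj.mpr (Or.inl rfl) :
      (pathGraph (n + 1)).Adj i.castSucc i.succ))
    rw [Fin.val_succ, Nat.even_add_one, ← Fin.val_castSucc, ← ih]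
    revert hne
    cases c (f i.castSucc) <;> cases c (f i.succ) <;> cases c (f 0) <;> simp

namespace Subgraph
variable {V : Type*} {G : SimpleGraph V} {C C₁ C₂ : G.Subgraph} {e e₁ e₂ : Sym2 V}

lemma adj_iff_deleteEdges_adj_or (he : e ∈ C.edgeSet) {x y : V} :
    C.Adj x y ↔ (C.deleteEdges {e}).Adj x y ∨ s(x, y) = e := by
  rw [deleteEdges_adj, Set.mem_singleton_iff]
  by_cases hxy : s(x, y) = e
  · subst hxy
    simpa using he
  · simp [hxy]

lemma neighborSet_deleteEdges_of_mem {v w : V} :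
    (C.deleteEdges {s(v, w)}).neighborSet v = C.neighborSet v \ {w} := by
  ext u
  simp only [mem_neighborSet, deleteEdges_adj, Set.mem_singleton_iff, Set.mem_sdiff,
    Sym2.congr_right]

lemma neighborSet_deleteEdges_of_notMem {v : V} (hv : v ∉ e) :
    (C.deleteEdges {e}).neighborSet v = C.neighborSet v := by
  ext u
  simp only [mem_neighborSet, deleteEdges_adj, Set.mem_singleton_iff, and_iff_left_iff_imp]
  rintro - rfl
  exact hv (Sym2.mem_mk_left v u)

lemma mem_iff_ncard_neighborSet_deleteEdges_eq_one
    (hC : ∀ v ∈ C.verts, (C.neighborSet v).ncard = 2) (he : e ∈ C.edgeSet) {v : V}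
    (hv : v ∈ C.verts) : v ∈ e ↔ ((C.deleteEdges {e}).neighborSet v).ncard = 1 := by
  by_cases hve : v ∈ e
  · obtain ⟨w, rfl⟩ := Sym2.mem_iff_exists.mp hve
    rw [neighborSet_deleteEdges_of_mem,
      Set.ncard_sdiff_singleton_of_mem (s := C.neighborSet v) (Subgraph.mem_edgeSet.mp he), hC v hv]
    simp
  · rw [neighborSet_deleteEdges_of_notMem hve, hC v hv]
    simp [hve]

lemma eq_and_eq_of_deleteEdges_eq
    (hC₁ : ∀ v ∈ C₁.verts, (C₁.neighborSet v).ncard = 2)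
    (hC₂ : ∀ v ∈ C₂.verts, (C₂.neighborSet v).ncard = 2)
    (he₁ : e₁ ∈ C₁.edgeSet) (he₂ : e₂ ∈ C₂.edgeSet)
    (h : C₁.deleteEdges {e₁} = C₂.deleteEdges {e₂}) : C₁ = C₂ ∧ e₁ = e₂ := by
  have hverts : C₁.verts = C₂.verts := by
    simpa only [deleteEdges_verts] using congrArg Subgraph.verts h
  have he : e₁ = e₂ := Sym2.ext fun v => by
    by_cases hv : v ∈ C₁.verts
    · rw [mem_iff_ncard_neighborSet_deleteEdges_eq_one hC₁ he₁ hv,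
        mem_iff_ncard_neighborSet_deleteEdges_eq_one hC₂ he₂ (hverts ▸ hv), h]
    · exact iff_of_false (fun hv₁ => hv (C₁.mem_verts_of_mem_edge he₁ hv₁))
        (fun hv₂ => hv (hverts ▸ C₂.mem_verts_of_mem_edge he₂ hv₂))
  subst he
  refine ⟨Subgraph.ext hverts ?_, rfl⟩
  ext x y
  rw [adj_iff_deleteEdges_adj_or he₁, adj_iff_deleteEdges_adj_or he₂, h]

end Subgraph

namespace Copy
variable {α α' β : Type*} {H H' : SimpleGraph α} {G : SimpleGraph β}

lemma toSubgraph_verts (f : Copy H G) : f.toSubgraph.verts = Set.range f := by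
  simp [Set.image_univ]

lemma toSubgraph_adj (f : Copy H G) {x y : β} :
    f.toSubgraph.Adj x y ↔ ∃ a b, H.Adj a b ∧ f a = x ∧ f b = y := by
  simp [Relation.Map]

lemma toSubgraph_adj_apply (f : Copy H G) {a b : α} :
    f.toSubgraph.Adj (f a) (f b) ↔ H.Adj a b := by
  rw [toSubgraph_adj]
  constructor
  · rintro ⟨a', b', h, ha, hb⟩
    rwa [← f.injective ha, ← f.injective hb]
  · exact fun h => ⟨a, b, h, rfl, rfl⟩

lemma neighborSet_toSubgraph (f : Copy H G) (a : α) :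
    f.toSubgraph.neighborSet (f a) = f '' H.neighborSet a := by
  ext y
  constructor
  · rintro ⟨a', b, hab, ha, rfl⟩
    rw [f.injective ha] at hab
    exact ⟨b, hab, rfl⟩
  · rintro ⟨b, hab, rfl⟩
    exact f.toSubgraph_adj_apply.mpr hab

lemma toSubgraph_comp_iso {K : SimpleGraph α'} (f : Copy H G) (e : K ≃g H) :
    (f.comp e.toCopy).toSubgraph = f.toSubgraph := by
  rw [toSubgraph, toSubgraph, Copy.comp, Subgraph.map_comp]
  exact congrArg _ (Subgraph.map_iso_top e)

lemma toSubgraph_deleteEdges {e : Sym2 α} (hH : H.deleteEdges {e} = H') (f : Copy H G)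
    (g : Copy H' G) (hfg : ⇑f = ⇑g) :
    f.toSubgraph.deleteEdges {e.map f} = g.toSubgraph := by
  subst hH
  apply Subgraph.ext
  · simp only [Subgraph.deleteEdges_verts, toSubgraph_verts, hfg]
  · ext x y
    simp only [Subgraph.deleteEdges_adj, toSubgraph_adj, Set.mem_singleton_iff, deleteEdges_adj,
      hfg]
    constructor
    · rintro ⟨⟨a, b, hab, rfl, rfl⟩, hne⟩
      exact ⟨a, b, ⟨hab, fun h => hne (congrArg (Sym2.map g) h)⟩, rfl, rfl⟩
    · rintro ⟨a, b, ⟨hab, hne⟩, rfl, rfl⟩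
      refine ⟨⟨a, b, hab, rfl, rfl⟩, fun h => hne (Sym2.map.injective g.injective ?_)⟩
      rwa [Sym2.map_mk]

def closePathGraph {m : ℕ} [NeZero m] (hm : 3 ≤ m) (p : Copy (pathGraph m) G)
    (h : G.Adj (p (-1)) (p 0)) : Copy (cycleGraph m) G where
  toHom := ⟨p, fun {a b} hab => by
    by_cases hab' : s(a, b) = s(-1, 0)
    · rcases Sym2.eq_iff.mp hab' with ⟨rfl, rfl⟩ | ⟨rfl, rfl⟩
      exacts [h, h.symm]
    · refine p.toHom.map_adj ?_
      rw [← cycleGraph_deleteEdges_eq_pathGraph hm]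
      exact deleteEdges_adj.mpr ⟨hab, hab'⟩⟩
  injective' := p.injective

end Copy

end SimpleGraph

def copySet {α β : Type*} (H : SimpleGraph α) (G : SimpleGraph β) : Set G.Subgraph :=
  {G' | Nonempty (G'.coe ≃g H)}

lemma mem_copySet_iff {α β : Type*} {H : SimpleGraph α} {G : SimpleGraph β} {G' : G.Subgraph} :
    G' ∈ copySet H G ↔ ∃ f : Copy H G, f.toSubgraph = G' := by
  rw [← Set.mem_range, Copy.range_toSubgraph]
  exact ⟨fun ⟨e⟩ => ⟨e.symm⟩, fun ⟨e⟩ => ⟨e.symm⟩⟩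

section CycleCopies
variable {β : Type*} {G : SimpleGraph β} {m : ℕ} [NeZero m]

lemma ncard_neighborSet_of_mem_copySet_cycleGraph (hm : 3 ≤ m) {C : G.Subgraph}
    (hC : C ∈ copySet (cycleGraph m) G) : ∀ v ∈ C.verts, (C.neighborSet v).ncard = 2 := by
  obtain ⟨c, rfl⟩ := mem_copySet_iff.mp hC
  rintro _ ⟨a, -, rfl⟩
  rw [Copy.coe_toHom, c.neighborSet_toSubgraph,
    Set.ncard_image_of_injective _ (f := c) c.injective, ncard_neighborSet_cycleGraph hm]

lemma ncard_edgeSet_of_mem_copySet_cycleGraph (hm : 3 ≤ m) {C : G.Subgraph}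
    (hC : C ∈ copySet (cycleGraph m) G) : C.edgeSet.ncard = m := by
  obtain ⟨c, rfl⟩ := mem_copySet_iff.mp hC
  rw [Subgraph.edgeSet_map, Set.ncard_image_of_injective _ (Sym2.map.injective c.injective),
    Subgraph.edgeSet_top, ncard_edgeSet_cycleGraph hm]

lemma deleteEdges_mem_copySet_pathGraph (hm : 3 ≤ m) {C : G.Subgraph}
    (hC : C ∈ copySet (cycleGraph m) G) {e : Sym2 β} (he : e ∈ C.edgeSet) :
    C.deleteEdges {e} ∈ copySet (pathGraph m) G := by
  obtain ⟨c, rfl⟩ := mem_copySet_iff.mp hC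
  rw [Subgraph.edgeSet_map, Subgraph.edgeSet_top] at he
  obtain ⟨⟨a, b⟩, he, rfl⟩ := he
  obtain ⟨r, hr⟩ := exists_eq_sub_one_of_cycleGraph_adj he
  -- rotate the labelling so that the deleted edge becomes the closing edge `s(-1, 0)`
  set c' := c.comp (cycleGraphRotate r).toCopy
  have hedge : Sym2.map c s(a, b) = Sym2.map c' s(-1, 0) := by
    rw [hr]
    simp [c', cycleGraphRotate, neg_add_eq_sub]
  rw [Copy.coe_toHom, hedge, ← c.toSubgraph_comp_iso (cycleGraphRotate r),
    c'.toSubgraph_deleteEdges (cycleGraph_deleteEdges_eq_pathGraph hm)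
      (c'.comp (Copy.ofLE _ _ pathGraph_le_cycleGraph)) rfl]
  exact mem_copySet_iff.mpr ⟨_, rfl⟩

lemma exists_deleteEdges_eq_of_mem_copySet_pathGraph (hm : 3 ≤ m) (hme : Even m)
    {c : β → Bool} (hc : ∀ x y, G.Adj x y ↔ c x ≠ c y) {P : G.Subgraph}
    (hP : P ∈ copySet (pathGraph m) G) :
    ∃ C ∈ copySet (cycleGraph m) G, ∃ e ∈ C.edgeSet, C.deleteEdges {e} = P := by
  obtain ⟨p, rfl⟩ := mem_copySet_iff.mp hP
  have hclose : G.Adj (p (-1)) (p 0) := by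
    obtain ⟨n, rfl⟩ : ∃ n, m = n + 1 := ⟨m - 1, by omega⟩
    have hcolor := pathGraph_hom_color_eq_iff_even (fun x y => (hc x y).mp) p.toHom (-1)
    rw [Copy.coe_toHom, Fin.coe_neg_one] at hcolor
    rw [hc, ne_eq, hcolor]
    exact Nat.even_add_one.mp hme
  set q := p.closePathGraph hm hclose
  exact ⟨q.toSubgraph, mem_copySet_iff.mpr ⟨q, rfl⟩, s(q (-1), q 0),
    q.toSubgraph_adj_apply.mpr (cycleGraph_adj_neg_one_zero (by omega)),
    q.toSubgraph_deleteEdges (cycleGraph_deleteEdges_eq_pathGraph hm) p rfl⟩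

end CycleCopies

section Counting
variable {β : Type*} (G : SimpleGraph β) {m : ℕ} [NeZero m]

def deleteCycleEdge (hm : 3 ≤ m) :
    (Σ C : copySet (cycleGraph m) G, (C : G.Subgraph).edgeSet) → copySet (pathGraph m) G :=
  fun x => ⟨x.1.1.deleteEdges {x.2.1}, deleteEdges_mem_copySet_pathGraph hm x.1.2 x.2.2⟩

lemma deleteCycleEdge_injective (hm : 3 ≤ m) : Injective (deleteCycleEdge G hm) := by
  rintro ⟨⟨C₁, hC₁⟩, e₁, he₁⟩ ⟨⟨C₂, hC₂⟩, e₂, he₂⟩ h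
  obtain ⟨rfl, rfl⟩ := Subgraph.eq_and_eq_of_deleteEdges_eq
    (ncard_neighborSet_of_mem_copySet_cycleGraph hm hC₁)
    (ncard_neighborSet_of_mem_copySet_cycleGraph hm hC₂) he₁ he₂ (congrArg Subtype.val h)
  rfl

lemma deleteCycleEdge_surjective (hm : 3 ≤ m) (hme : Even m) {c : β → Bool}
    (hc : ∀ x y, G.Adj x y ↔ c x ≠ c y) : Surjective (deleteCycleEdge G hm) := by
  rintro ⟨P, hP⟩
  obtain ⟨C, hC, e, he, rfl⟩ := exists_deleteEdges_eq_of_mem_copySet_pathGraph hm hme hc hP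
  exact ⟨⟨⟨C, hC⟩, e, he⟩, rfl⟩

variable [Fintype β]

lemma card_sigma_edgeSet_copySet_cycleGraph (hm : 3 ≤ m) :
    Nat.card (Σ C : copySet (cycleGraph m) G, (C : G.Subgraph).edgeSet) =
      m * _root_.copyCount (cycleGraph m) G := by
  have := Fintype.ofFinite (copySet (cycleGraph m) G)
  simp only [Nat.card_sigma, Nat.card_coe_set_eq]
  rw [Finset.sum_congr rfl fun C _ => ncard_edgeSet_of_mem_copySet_cycleGraph hm C.2,
    Finset.sum_const, Finset.card_univ, smul_eq_mul, mul_comm, ← Nat.card_eq_fintype_card,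
    Nat.card_coe_set_eq]
  rfl

theorem mul_copyCount_cycleGraph_le (hm : 3 ≤ m) :
    m * _root_.copyCount (cycleGraph m) G ≤ _root_.copyCount (pathGraph m) G := by
  rw [← card_sigma_edgeSet_copySet_cycleGraph G hm]
  exact Nat.card_le_card_of_injective _ (deleteCycleEdge_injective G hm)

theorem copyCount_pathGraph_eq_mul (hm : 3 ≤ m) (hme : Even m) {c : β → Bool}
    (hc : ∀ x y, G.Adj x y ↔ c x ≠ c y) :
    _root_.copyCount (pathGraph m) G = m * _root_.copyCount (cycleGraph m) G := by
  rw [← card_sigma_edgeSet_copySet_cycleGraph G hm]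
  exact (Nat.card_congr (Equiv.ofBijective _
    ⟨deleteCycleEdge_injective G hm, deleteCycleEdge_surjective G hm hme hc⟩)).symm

end Counting

section Turan
variable {α γ : Type*} {n : ℕ} {H : SimpleGraph α} {F : SimpleGraph γ}

lemma bddAbove_copyCount_of_free :
    BddAbove {N | ∃ G : SimpleGraph (Fin n), copyCount F G = 0 ∧ copyCount H G = N} :=
  (Set.finite_range fun G : SimpleGraph (Fin n) => copyCount H G).bddAbove.mono
    (by rintro _ ⟨G, -, rfl⟩; exact ⟨G, rfl⟩)

lemma copyCount_le_exNum {G : SimpleGraph (Fin n)} (hG : copyCount F G = 0) :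
    copyCount H G ≤ exNum n H F :=
  le_csSup bddAbove_copyCount_of_free ⟨G, hG, rfl⟩

lemma exNum_le {N : ℕ}
    (h : ∀ G : SimpleGraph (Fin n), copyCount F G = 0 → copyCount H G ≤ N) : exNum n H F ≤ N :=
  csSup_le' (by rintro _ ⟨G, hG, rfl⟩; exact h G hG)

end Turan

/-- If `G₀` is an `F`-free complete bipartite graph on `n` vertices maximizing the number
of copies of `P_{2k}`, i.e. `N(P_{2k}, G₀) = ex(n, P_{2k}, F)`, then `G₀` also maximizes
the number of copies of `C_{2k}`: `N(C_{2k}, G₀) = ex(n, C_{2k}, F)`. -/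
theorem completeBipartite_path_extremal_implies_cycle_extremal {γ : Type*}
    (F : SimpleGraph γ) (k : ℕ) (hk : 2 ≤ k) (n : ℕ) (G₀ : SimpleGraph (Fin n))
    (hbip : ∃ a b : ℕ, a + b = n ∧
      Nonempty (G₀ ≃g completeBipartiteGraph (Fin a) (Fin b)))
    (hfree : copyCount F G₀ = 0)
    (hmax : _root_.copyCount (pathGraph (2 * k)) G₀ = exNum n (pathGraph (2 * k)) F) :
    _root_.copyCount (cycleGraph (2 * k)) G₀ = exNum n (cycleGraph (2 * k)) F := by
  have hm : 3 ≤ 2 * k := by omega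
  have : NeZero (2 * k) := ⟨by omega⟩
  obtain ⟨a, b, -, ⟨e⟩⟩ := hbip
  have hc : ∀ x y, G₀.Adj x y ↔ (e x).isLeft ≠ (e y).isLeft := fun x y => by
    rw [← e.map_adj_iff]
    cases e x <;> cases e y <;> simp
  have hG₀ := copyCount_pathGraph_eq_mul G₀ hm (even_two_mul k) hc
  refine le_antisymm (copyCount_le_exNum hfree) (exNum_le fun G hG => ?_)
  refine Nat.le_of_mul_le_mul_left ?_ (by omega : 0 < 2 * k)
  calc 2 * k * _root_.copyCount (cycleGraph (2 * k)) G
      ≤ _root_.copyCount (pathGraph (2 * k)) G := mul_copyCount_cycleGraph_le G hm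
    _ ≤ exNum n (pathGraph (2 * k)) F := copyCount_le_exNum hG
    _ = 2 * k * _root_.copyCount (cycleGraph (2 * k)) G₀ := by rw [← hmax, hG₀]
end

section
/- Let G be a C_5-free graph on n vertices and uv an edge of G not contained in any triangle. Then the number of copies of P_4 in G containing the edge uv is at most 2·e' + |B|·|C|, where e' is the number of edges of G − {u,v}, B is the set of vertices adjacent to u but not v, and C is the set of vertices adjacent to v but not u. -/
/-!
A copy of `P₄` through the edge `uv` has `uv` either as its middle edge, `x - u - v - y`, or as
an end edge, `w' - w - x - y` with `{w, w'} = {u, v}`. In the first case the copy is determined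
by `(x, y)`, and because `uv` lies in no triangle, `x ∈ B` and `y ∈ C`. In the second case it is
determined by the ordered edge `(x, y)` of `G - {u, v}`: `w` is the unique neighbour of `x` in
`{u, v}`, again because `uv` lies in no triangle. There are `2e'` such ordered edges.
-/

open SimpleGraph

/-- Number of copies of `H` in `G` containing the edge `uv`. -/
noncomputable def copyCountThrough {α β : Type*} [Fintype β] (H : SimpleGraph α)
    (G : SimpleGraph β) (u v : β) : ℕ :=
  {G' : G.Subgraph | Nonempty (G'.coe ≃g H) ∧ G'.Adj u v}.ncard

theorem Set.ncard_le_ncard_of_forall_subsingleton {α β : Type*} {s : Set α} {t : Set β}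
    (r : α → β → Prop) (hs : ∀ a ∈ s, ∃ b ∈ t, r a b)
    (ht : ∀ b ∈ t, {a | a ∈ s ∧ r a b}.Subsingleton) (htf : t.Finite) :
    s.ncard ≤ t.ncard := by
  obtain rfl | ⟨a₀, ha₀⟩ := s.eq_empty_or_nonempty
  · simp
  have : Nonempty β := ⟨(hs a₀ ha₀).choose⟩
  choose! f hft hfr using hs
  exact Set.ncard_le_ncard_of_injOn f hft
    (fun a ha a' ha' h => ht _ (hft a ha) ⟨ha, hfr a ha⟩ ⟨ha', h ▸ hfr a' ha'⟩) htf

namespace SimpleGraph.Subgraph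

variable {V : Type*} {G : SimpleGraph V}

def IsP4 (G' : G.Subgraph) (a b c d : V) : Prop :=
  [a, b, c, d].Nodup ∧ G'.verts = {a, b, c, d} ∧
    ∀ p q, G'.Adj p q ↔ s(p, q) = s(a, b) ∨ s(p, q) = s(b, c) ∨ s(p, q) = s(c, d)

variable {G' G₁ G₂ : G.Subgraph} {a b c d u v : V}

theorem IsP4.reverse (h : G'.IsP4 a b c d) : G'.IsP4 d c b a := by
  obtain ⟨hnd, hverts, hadj⟩ := h
  refine ⟨by simp [eq_comm] at hnd ⊢; tauto, ?_, fun p q => ?_⟩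
  · rw [hverts]; ext; simp only [Set.mem_insert_iff, Set.mem_singleton_iff]; tauto
  · rw [hadj, Sym2.eq_swap (a := d) (b := c), Sym2.eq_swap (a := c) (b := b),
      Sym2.eq_swap (a := b) (b := a)]
    tauto

theorem IsP4.unique (h₁ : G₁.IsP4 a b c d) (h₂ : G₂.IsP4 a b c d) : G₁ = G₂ :=
  Subgraph.ext (h₁.2.1.trans h₂.2.1.symm) <| by
    funext p q; exact propext ((h₁.2.2 p q).trans (h₂.2.2 p q).symm)

theorem IsP4.adj (h : G'.IsP4 a b c d) : G.Adj a b ∧ G.Adj b c ∧ G.Adj c d :=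
  ⟨((h.2.2 a b).2 (by simp)).adj_sub, ((h.2.2 b c).2 (by simp)).adj_sub,
    ((h.2.2 c d).2 (by simp)).adj_sub⟩

theorem exists_isP4_of_iso (e : G'.coe ≃g pathGraph 4) : ∃ a b c d, G'.IsP4 a b c d := by
  let f : Fin 4 → V := fun i => e.symm i
  have hf : ∀ z ∈ G'.verts, ∃ i, f i = z := fun z hz => ⟨e ⟨z, hz⟩, by simp [f]⟩
  have hadj : ∀ i j, G'.Adj (f i) (f j) ↔ (pathGraph 4).Adj i j := fun i j =>
    e.symm.map_adj_iff
  refine ⟨f 0, f 1, f 2, f 3, ?_, ?_, fun p q => ⟨fun h => ?_, fun h => ?_⟩⟩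
  · have hinj : Function.Injective f := fun i j h => e.symm.injective (Subtype.val_injective h)
    simp [hinj.eq_iff]
  · ext z
    simp only [Set.mem_insert_iff, Set.mem_singleton_iff]
    refine ⟨fun hz => ?_, by rintro (rfl | rfl | rfl | rfl) <;> exact (e.symm _).2⟩
    obtain ⟨i, rfl⟩ := hf z hz
    fin_cases i <;> simp
  · obtain ⟨i, rfl⟩ := hf p (G'.edge_vert h)
    obtain ⟨j, rfl⟩ := hf q (G'.edge_vert h.symm)
    have := (hadj i j).1 h
    rw [pathGraph_adj] at this
    fin_cases i <;> fin_cases j <;> simp_all [Sym2.eq_swap]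
  · rcases h with h | h | h <;> rcases Sym2.eq_iff.1 h with ⟨rfl, rfl⟩ | ⟨rfl, rfl⟩ <;>
      exact (hadj _ _).2 (by rw [pathGraph_adj]; decide)

theorem IsP4.exists_of_adj_first (h : G'.IsP4 a b c d) (huv : s(u, v) = s(a, b)) :
    ∃ x y, G'.IsP4 u v x y ∨ G'.IsP4 v u x y := by
  rcases Sym2.eq_iff.1 huv with ⟨rfl, rfl⟩ | ⟨rfl, rfl⟩
  exacts [⟨c, d, .inl h⟩, ⟨c, d, .inr h⟩]

theorem IsP4.exists_middle_or_end (h : G'.IsP4 a b c d) (huv : G'.Adj u v) :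
    (∃ x y, G'.IsP4 x u v y) ∨ ∃ x y, G'.IsP4 u v x y ∨ G'.IsP4 v u x y := by
  rcases (h.2.2 u v).1 huv with hab | hbc | hcd
  · exact .inr (h.exists_of_adj_first hab)
  · rcases Sym2.eq_iff.1 hbc with ⟨rfl, rfl⟩ | ⟨rfl, rfl⟩
    exacts [.inl ⟨a, d, h⟩, .inl ⟨d, a, h.reverse⟩]
  · exact .inr (h.reverse.exists_of_adj_first (hcd.trans Sym2.eq_swap))

end SimpleGraph.Subgraph

namespace SimpleGraph

variable {V : Type*} {G : SimpleGraph V} {u v : V}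

theorem nat_card_dart_eq_two_mul_ncard_edgeSet [Finite V] :
    Nat.card G.Dart = 2 * G.edgeSet.ncard := by
  classical
  have := Fintype.ofFinite V
  rw [Nat.card_eq_fintype_card, dart_card_eq_twice_card_edges, ← coe_edgeFinset,
    Set.ncard_coe_finset]

theorem ncard_setOf_isP4_middle_le [Finite V] (htri : ∀ w, ¬ (G.Adj u w ∧ G.Adj v w)) :
    {G' : G.Subgraph | ∃ x y, G'.IsP4 x u v y}.ncard ≤
      {x | x ≠ u ∧ x ≠ v ∧ G.Adj u x ∧ ¬ G.Adj v x}.ncard *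
        {x | x ≠ u ∧ x ≠ v ∧ G.Adj v x ∧ ¬ G.Adj u x}.ncard := by
  rw [← Set.ncard_prod]
  refine Set.ncard_le_ncard_of_forall_subsingleton (fun G' p => G'.IsP4 p.1 u v p.2)
    ?_ ?_ (Set.toFinite _)
  · rintro G' ⟨x, y, h⟩
    obtain ⟨hx, -, hy⟩ := h.adj
    have hnd := h.1
    simp only [List.nodup_cons, List.mem_cons, List.not_mem_nil, or_false, not_or] at hnd
    obtain ⟨⟨hxu, hxv, -⟩, ⟨-, huy⟩, hvy, -⟩ := hnd
    exact ⟨(x, y), Set.mk_mem_prod ⟨hxu, hxv, hx.symm, fun hvx => htri x ⟨hx.symm, hvx⟩⟩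
      ⟨Ne.symm huy, Ne.symm hvy, hy, fun hyu => htri y ⟨hyu, hy⟩⟩, h⟩
  · rintro p - G₁ ⟨-, h₁⟩ G₂ ⟨-, h₂⟩
    exact h₁.unique h₂

theorem ncard_setOf_isP4_end_le [Finite V] (htri : ∀ w, ¬ (G.Adj u w ∧ G.Adj v w)) :
    {G' : G.Subgraph | ∃ x y, G'.IsP4 u v x y ∨ G'.IsP4 v u x y}.ncard ≤
      2 * (G.induce {x | x ≠ u ∧ x ≠ v}).edgeSet.ncard := by
  classical
  have := Fintype.ofFinite V
  rw [← nat_card_dart_eq_two_mul_ncard_edgeSet, ← Set.ncard_univ]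
  refine Set.ncard_le_ncard_of_forall_subsingleton
    (fun G' d => G'.IsP4 u v d.fst d.snd ∨ G'.IsP4 v u d.fst d.snd) ?_ ?_ (Set.toFinite _)
  · rintro G' ⟨x, y, h⟩
    have ⟨hnd, hxy⟩ : [u, v, x, y].Nodup ∧ G.Adj x y := by
      rcases h with h | h
      · exact ⟨h.1, h.adj.2.2⟩
      · exact ⟨(List.Perm.swap u v _).nodup_iff.1 h.1, h.adj.2.2⟩
    simp only [List.nodup_cons, List.mem_cons, List.not_mem_nil, or_false, not_or] at hnd
    obtain ⟨⟨-, hux, huy⟩, ⟨hvx, hvy⟩, -⟩ := hnd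
    exact ⟨⟨(⟨x, Ne.symm hux, Ne.symm hvx⟩, ⟨y, Ne.symm huy, Ne.symm hvy⟩), hxy⟩,
      Set.mem_univ _, h⟩
  · rintro d - G₁ ⟨-, h₁ | h₁⟩ G₂ ⟨-, h₂ | h₂⟩
    · exact h₁.unique h₂
    · exact (htri _ ⟨h₂.adj.2.1, h₁.adj.2.1⟩).elim
    · exact (htri _ ⟨h₁.adj.2.1, h₂.adj.2.1⟩).elim
    · exact h₁.unique h₂

end SimpleGraph

theorem p4_through_triangle_free_edge_le_general (n : ℕ) (G : SimpleGraph (Fin n))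
    (u v : Fin n) (htri : ∀ w, ¬ (G.Adj u w ∧ G.Adj v w)) :
    copyCountThrough (pathGraph 4) G u v ≤
      2 * (G.induce {x : Fin n | x ≠ u ∧ x ≠ v}).edgeSet.ncard +
        {x : Fin n | x ≠ u ∧ x ≠ v ∧ G.Adj u x ∧ ¬ G.Adj v x}.ncard *
          {x : Fin n | x ≠ u ∧ x ≠ v ∧ G.Adj v x ∧ ¬ G.Adj u x}.ncard := by
  have hcover : {G' : G.Subgraph | Nonempty (G'.coe ≃g pathGraph 4) ∧ G'.Adj u v} ⊆
      {G' | ∃ x y, G'.IsP4 x u v y} ∪ {G' | ∃ x y, G'.IsP4 u v x y ∨ G'.IsP4 v u x y} := by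
    rintro G' ⟨⟨e⟩, huv⟩
    obtain ⟨a, b, c, d, h⟩ := Subgraph.exists_isP4_of_iso e
    exact h.exists_middle_or_end huv
  calc copyCountThrough (pathGraph 4) G u v
      ≤ ({G' : G.Subgraph | ∃ x y, G'.IsP4 x u v y} ∪
          {G' | ∃ x y, G'.IsP4 u v x y ∨ G'.IsP4 v u x y}).ncard :=
        Set.ncard_le_ncard hcover (Set.toFinite _)
    _ ≤ _ := Set.ncard_union_le _ _
    _ ≤ _ := add_le_add (ncard_setOf_isP4_middle_le htri) (ncard_setOf_isP4_end_le htri)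
    _ = _ := add_comm _ _

/-- Let `G` be a `C₅`-free graph on `n` vertices and `uv` an edge contained in no triangle.
Then the number of copies of `P₄` containing the edge `uv` is at most `2e' + |B||C|`, where
`e'` is the number of edges of `G - {u, v}`, `B` is the set of vertices adjacent to `u` but
not `v`, and `C` is the set of vertices adjacent to `v` but not `u`. -/
theorem p4_through_triangle_free_edge_le (n : ℕ) (G : SimpleGraph (Fin n))
    (hC5free : _root_.copyCount (cycleGraph 5) G = 0) (u v : Fin n) (huv : G.Adj u v)
    (htri : ∀ w, ¬ (G.Adj u w ∧ G.Adj v w)) :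
    copyCountThrough (pathGraph 4) G u v ≤
      2 * (G.induce {x : Fin n | x ≠ u ∧ x ≠ v}).edgeSet.ncard +
        {x : Fin n | x ≠ u ∧ x ≠ v ∧ G.Adj u x ∧ ¬ G.Adj v x}.ncard *
          {x : Fin n | x ≠ u ∧ x ≠ v ∧ G.Adj v x ∧ ¬ G.Adj u x}.ncard :=
  p4_through_triangle_free_edge_le_general n G u v htri
end

section
/- Let n be large and G an F_2-free graph on n vertices, where F_2 is two triangles sharing exactly one vertex. If an edge uv of G lies in a copy of K_4, then every vertex outside that K_4 is adjacent to at most one vertex of the K_4, and consequently the number of copies of C_4 containing uv is at most 3 + ⌊(n−4)²/4⌋, assuming ex(n−4, F_2) = ⌊(n−4)²/4⌋ + 1. -/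
open SimpleGraph

/-- The 2-fan `F₂`: two triangles `{0,1,2}` and `{0,3,4}` sharing exactly the vertex `0`. -/
def fanGraphTwo : SimpleGraph (Fin 5) :=
  SimpleGraph.fromEdgeSet {s(0, 1), s(0, 2), s(1, 2), s(0, 3), s(0, 4), s(3, 4)}

/-!
If a vertex `z` outside the `K₄` on `u, v, x, y` were adjacent to two of its vertices `a, b`, then
the triangle `z a b` and the triangle formed by `a` and the remaining two vertices of the `K₄` would
be an `F₂`.

A `C₄` through `uv` is a cycle `u v w z`, determined by the pair `(w, z)`. If `w` or `z` lies in
the `K₄`, the first part forces `(w, z) ∈ {(x, y), (y, x)}`. Otherwise `wz` is an edge of the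
`F₂`-free graph `G - K₄`, and no edge arises from both of its orientations, since `w` would then
be adjacent to both `u` and `v`. This gives at most `2 + ex(n - 4, F₂)` cycles.
-/

theorem copyCount_eq_zero_iff_free {α β : Type*} [Fintype β] {H : SimpleGraph α}
    {G : SimpleGraph β} : _root_.copyCount H G = 0 ↔ H.Free G := by
  rw [_root_.copyCount, Set.ncard_eq_zero, Free, isContained_iff_exists_iso_subgraph,
    Set.eq_empty_iff_forall_notMem]
  simp only [Set.mem_ofPred_eq, not_exists, not_nonempty_iff]
  exact ⟨fun h G' => ⟨fun e => (h G').false e.symm⟩, fun h G' => ⟨fun e => (h G').false e.symm⟩⟩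

namespace SimpleGraph

variable {V : Type*} {G : SimpleGraph V}

theorem fanGraphTwo_isContained {f : Fin 5 → V} (hf : Function.Injective f)
    (h01 : G.Adj (f 0) (f 1)) (h02 : G.Adj (f 0) (f 2)) (h12 : G.Adj (f 1) (f 2))
    (h03 : G.Adj (f 0) (f 3)) (h04 : G.Adj (f 0) (f 4)) (h34 : G.Adj (f 3) (f 4)) :
    fanGraphTwo ⊑ G := by
  refine ⟨⟨⟨f, fun {i j} hij => ?_⟩, hf⟩⟩
  simp only [fanGraphTwo, fromEdgeSet_adj, Set.mem_insert_iff, Set.mem_singleton_iff] at hij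
  rcases hij.1 with h | h | h | h | h | h <;>
    rcases Sym2.eq_iff.1 h with ⟨rfl, rfl⟩ | ⟨rfl, rfl⟩ <;>
    first | assumption | exact Adj.symm ‹_›

theorem IsNClique.fanGraphTwo_isContained [DecidableEq V] {s : Finset V}
    (hs : G.IsNClique 4 s) {z a b : V} (hz : z ∉ s) (ha : a ∈ s) (hb : b ∈ s) (hab : a ≠ b)
    (hza : G.Adj z a) (hzb : G.Adj z b) : fanGraphTwo ⊑ G := by
  have hcard : ((s.erase a).erase b).card = 2 := by
    rw [Finset.card_erase_of_mem (Finset.mem_erase.2 ⟨hab.symm, hb⟩),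
      Finset.card_erase_of_mem ha, hs.card_eq]
  obtain ⟨c, d, hcd, hst⟩ := Finset.card_eq_two.1 hcard
  have hc : c ∈ (s.erase a).erase b := by simp [hst]
  have hd : d ∈ (s.erase a).erase b := by simp [hst]
  simp only [Finset.mem_erase] at hc hd
  obtain ⟨hcb, hca, hc⟩ := hc
  obtain ⟨hdb, hda, hd⟩ := hd
  refine SimpleGraph.fanGraphTwo_isContained (f := ![a, z, b, c, d]) ?_ hza.symm
    (hs.1 ha hb hab) hzb (hs.1 ha hc hca.symm) (hs.1 ha hd hda.symm) (hs.1 hc hd hcd)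
  intro i j hij
  fin_cases i <;> fin_cases j <;> simp_all [eq_comm]

theorem isNClique_four_of_adj [DecidableEq V] {u v x y : V} (hdist : [u, v, x, y].Nodup)
    (hK4 : G.Adj u v ∧ G.Adj u x ∧ G.Adj u y ∧ G.Adj v x ∧ G.Adj v y ∧ G.Adj x y) :
    G.IsNClique 4 {u, v, x, y} := by
  obtain ⟨huv, hux, huy, hvx, hvy, hxy⟩ := hK4
  refine ⟨?_, ?_⟩
  · simp [isClique_insert, huv, hux, huy, hvx, hvy, hxy]
  · simpa using List.toFinset_card_of_nodup hdist

theorem cycleGraph_four_exists_iso {i j : Fin 4} (h : (cycleGraph 4).Adj i j) :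
    ∃ σ : cycleGraph 4 ≃g cycleGraph 4, σ 0 = i ∧ σ 1 = j := by
  have : ∃ σ : Equiv.Perm (Fin 4),
      (∀ a b, (cycleGraph 4).Adj (σ a) (σ b) ↔ (cycleGraph 4).Adj a b) ∧ σ 0 = i ∧ σ 1 = j := by
    revert i j; decide
  obtain ⟨σ, hσ, h0, h1⟩ := this
  exact ⟨⟨σ, hσ _ _⟩, h0, h1⟩

theorem Copy.toSubgraph_comp_iso_s15 {α β : Type*} {A : SimpleGraph α} {B : SimpleGraph β}
    (f : Copy A B) (σ : A ≃g A) : (f.comp σ.toCopy).toSubgraph = f.toSubgraph := by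
  ext x y
  · simpa using (σ.surjective.exists (p := fun y => f y = x)).symm
  · simp only [Subgraph.map_adj, Relation.Map, Subgraph.top_adj, Copy.coe_toHom, Copy.coe_comp]
    constructor
    · rintro ⟨a, b, hab, rfl, rfl⟩
      exact ⟨σ a, σ b, σ.map_adj_iff.2 hab, rfl, rfl⟩
    · rintro ⟨a, b, hab, rfl, rfl⟩
      exact ⟨σ.symm a, σ.symm b, σ.symm.map_adj_iff.2 hab, by simp, by simp⟩

def AtMostOneNeighbourIn (G : SimpleGraph V) (s : Set V) : Prop :=
  ∀ z, z ∉ s → ∀ a ∈ s, ∀ b ∈ s, a ≠ b → ¬ (G.Adj z a ∧ G.Adj z b)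

theorem IsNClique.atMostOneNeighbourIn [DecidableEq V] {s : Finset V} (hs : G.IsNClique 4 s)
    (hG : fanGraphTwo.Free G) : G.AtMostOneNeighbourIn s :=
  fun _ hz _ ha _ hb hab ⟨hza, hzb⟩ => hG (hs.fanGraphTwo_isContained hz ha hb hab hza hzb)

theorem Subgraph.exists_copy_cycleGraph_four {G' : G.Subgraph} (e : G'.coe ≃g cycleGraph 4)
    {u v : V} (huv : G'.Adj u v) :
    ∃ f : Copy (cycleGraph 4) G, f 0 = u ∧ f 1 = v ∧ f.toSubgraph = G' := by
  obtain ⟨f, -, rfl⟩ : G' ∈ Set.range Copy.toSubgraph := by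
    rw [Copy.range_toSubgraph]
    exact ⟨e.symm⟩
  obtain ⟨i, j, hij, rfl, rfl⟩ := huv
  obtain ⟨σ, rfl, rfl⟩ := cycleGraph_four_exists_iso hij
  exact ⟨f.comp σ.toCopy, rfl, rfl, f.toSubgraph_comp_iso_s15 σ⟩

/-- The pairs `(w, z)` for which `u v w z` is a 4-cycle of `G`; each copy of `C₄` through `uv`
gives exactly one of them. -/
def c4Completions (G : SimpleGraph V) (u v : V) : Set (V × V) :=
  {p | G.Adj v p.1 ∧ G.Adj p.1 p.2 ∧ G.Adj p.2 u ∧ p.1 ≠ u ∧ p.2 ≠ v}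

theorem copyCountThrough_cycleGraph_four_le [Fintype V] (u v : V) :
    copyCountThrough (cycleGraph 4) G u v ≤ (G.c4Completions u v).ncard := by
  have : Finite (Copy (cycleGraph 4) G) := Finite.of_injective _ DFunLike.coe_injective
  let T : Set (Copy (cycleGraph 4) G) := {f | f 0 = u ∧ f 1 = v}
  have hsub : {G' : G.Subgraph | Nonempty (G'.coe ≃g cycleGraph 4) ∧ G'.Adj u v} ⊆
      Copy.toSubgraph '' T := by
    rintro G' ⟨⟨e⟩, huv⟩
    obtain ⟨f, hu, hv, rfl⟩ := G'.exists_copy_cycleGraph_four e huv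
    exact ⟨f, ⟨hu, hv⟩, rfl⟩
  calc copyCountThrough (cycleGraph 4) G u v ≤ (Copy.toSubgraph '' T).ncard :=
        Set.ncard_le_ncard hsub
    _ ≤ T.ncard := Set.ncard_image_le
    _ ≤ (G.c4Completions u v).ncard := by
      refine Set.ncard_le_ncard_of_injOn (fun f => (f 2, f 3)) ?_ ?_
      · rintro f ⟨rfl, rfl⟩
        have hadj : ∀ i j : Fin 4, (cycleGraph 4).Adj i j → G.Adj (f i) (f j) :=
          fun i j h => f.toHom.map_adj h
        exact ⟨hadj 1 2 (by decide), hadj 2 3 (by decide), hadj 3 0 (by decide),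
          fun h => absurd (f.injective h) (by decide), fun h => absurd (f.injective h) (by decide)⟩
      · rintro f ⟨hf0, hf1⟩ f' ⟨hf0', hf1'⟩ h
        simp only [Prod.mk.injEq] at h
        ext i
        fin_cases i
        exacts [hf0.trans hf0'.symm, hf1.trans hf1'.symm, h.1, h.2]

theorem c4Completions_subset {u v x y : V} (hK : G.AtMostOneNeighbourIn {u, v, x, y}) :
    G.c4Completions u v ⊆ {(x, y), (y, x)} ∪
      {p ∈ G.c4Completions u v | p.1 ∉ ({u, v, x, y} : Set V) ∧ p.2 ∉ ({u, v, x, y} : Set V)} := by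
  rintro ⟨w, z⟩ hp
  obtain ⟨hvw, hwz, hzu, hwu, hzv⟩ := id hp
  by_cases hw : w ∈ ({u, v, x, y} : Set V)
  · have hz : z ∈ ({u, v, x, y} : Set V) := by
      by_contra hz
      exact hK z hz w hw u (by simp) hwu ⟨hwz.symm, hzu⟩
    left
    simp only [Set.mem_insert_iff, Set.mem_singleton_iff] at hw hz
    rcases hw with rfl | rfl | rfl | rfl <;> rcases hz with rfl | rfl | rfl | rfl <;> simp_all
  · have hz : z ∉ ({u, v, x, y} : Set V) :=
      fun hz => hK w hw v (by simp) z hz hzv.symm ⟨hvw.symm, hwz⟩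
    exact Or.inr ⟨hp, hw, hz⟩

theorem ncard_le_ncard_edgeSet_comap {W : Type*} [Finite W] {g : W → V} {S : Set (V × V)}
    (hS : ∀ p ∈ S, G.Adj p.1 p.2 ∧ p.1 ∈ Set.range g ∧ p.2 ∈ Set.range g)
    (hswap : ∀ p ∈ S, p.swap ∉ S) : S.ncard ≤ (G.comap g).edgeSet.ncard := by
  have hinj : S.InjOn fun p => s(p.1, p.2) := by
    rintro ⟨a, b⟩ hp ⟨c, d⟩ hq h
    rcases Sym2.eq_iff.1 h with ⟨rfl, rfl⟩ | ⟨rfl, rfl⟩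
    · rfl
    · exact absurd hq (hswap _ hp)
  have hsub : (fun p => s(p.1, p.2)) '' S ⊆ Sym2.map g '' (G.comap g).edgeSet := by
    rintro _ ⟨⟨a, b⟩, hp, rfl⟩
    obtain ⟨hab, ⟨i, rfl⟩, ⟨j, rfl⟩⟩ := hS _ hp
    exact ⟨s(i, j), hab, rfl⟩
  calc S.ncard = ((fun p => s(p.1, p.2)) '' S).ncard := hinj.ncard_image.symm
    _ ≤ (Sym2.map g '' (G.comap g).edgeSet).ncard := Set.ncard_le_ncard hsub
    _ ≤ (G.comap g).edgeSet.ncard := Set.ncard_image_le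

theorem ncard_c4Completions_le [Finite V] {W : Type*} [Finite W] {g : W → V} {u v x y : V}
    (hK : G.AtMostOneNeighbourIn {u, v, x, y}) (huv : u ≠ v)
    (hg : Set.range g = ({u, v, x, y} : Set V)ᶜ) :
    (G.c4Completions u v).ncard ≤ 2 + (G.comap g).edgeSet.ncard := by
  set outside :=
    {p ∈ G.c4Completions u v | p.1 ∉ ({u, v, x, y} : Set V) ∧ p.2 ∉ ({u, v, x, y} : Set V)}
  have houtside : outside.ncard ≤ (G.comap g).edgeSet.ncard := by
    refine ncard_le_ncard_edgeSet_comap ?_ ?_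
    · rintro p ⟨⟨-, hp, -⟩, h1, h2⟩
      exact ⟨hp, hg ▸ h1, hg ▸ h2⟩
    · rintro ⟨w, z⟩ ⟨⟨hvw, -⟩, hw, -⟩ ⟨⟨-, -, hwu, -⟩, -⟩
      exact hK w hw u (by simp) v (by simp) huv ⟨hwu, hvw.symm⟩
  calc (G.c4Completions u v).ncard ≤ ({(x, y), (y, x)} ∪ outside).ncard :=
        Set.ncard_le_ncard (c4Completions_subset hK)
    _ ≤ ({(x, y), (y, x)} : Set (V × V)).ncard + outside.ncard := Set.ncard_union_le _ _
    _ ≤ 2 + (G.comap g).edgeSet.ncard := by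
      gcongr
      exact (Set.ncard_insert_le _ _).trans (by simp)

end SimpleGraph

/-- Let `G` be an `F₂`-free graph on `n` vertices and suppose the edge `uv` lies in a `K₄`
with vertices `u, v, x, y`. Then every vertex outside the `K₄` is adjacent to at most one of
its vertices, and (assuming the Erdős–Füredi–Gould–Gunderson bound
`ex(n - 4, F₂) = ⌊(n-4)²/4⌋ + 1`) the number of copies of `C₄` containing `uv` is at most
`3 + ⌊(n-4)²/4⌋`. -/
theorem fanFree_c4_through_K4_edge (n : ℕ) (G : SimpleGraph (Fin n))
    (hfree : _root_.copyCount fanGraphTwo G = 0) (u v x y : Fin n)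
    (hdist : [u, v, x, y].Nodup)
    (hK4 : G.Adj u v ∧ G.Adj u x ∧ G.Adj u y ∧ G.Adj v x ∧ G.Adj v y ∧ G.Adj x y)
    (hex : ∀ H : SimpleGraph (Fin (n - 4)), _root_.copyCount fanGraphTwo H = 0 →
      H.edgeSet.ncard ≤ (n - 4) ^ 2 / 4 + 1) :
    (∀ z : Fin n, z ∉ ({u, v, x, y} : Set (Fin n)) →
      ∀ a ∈ ({u, v, x, y} : Set (Fin n)), ∀ b ∈ ({u, v, x, y} : Set (Fin n)),
        a ≠ b → ¬ (G.Adj z a ∧ G.Adj z b)) ∧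
      copyCountThrough (cycleGraph 4) G u v ≤ 3 + (n - 4) ^ 2 / 4 := by
  have hG : fanGraphTwo.Free G := copyCount_eq_zero_iff_free.1 hfree
  have hK : G.IsNClique 4 {u, v, x, y} := isNClique_four_of_adj hdist hK4
  have hsep : G.AtMostOneNeighbourIn {u, v, x, y} := by
    simpa using hK.atMostOneNeighbourIn hG
  refine ⟨hsep, ?_⟩
  have hcard : ({u, v, x, y} : Finset (Fin n))ᶜ.card = n - 4 := by
    rw [Finset.card_compl, hK.card_eq, Fintype.card_fin]
  set g := ({u, v, x, y} : Finset (Fin n))ᶜ.orderEmbOfFin hcard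
  have hg : Set.range g = ({u, v, x, y} : Set (Fin n))ᶜ := by
    simp only [g, Finset.range_orderEmbOfFin, Finset.coe_compl, Finset.coe_insert,
      Finset.coe_singleton]
  have hH : _root_.copyCount fanGraphTwo (G.comap g) = 0 :=
    copyCount_eq_zero_iff_free.2 fun h => hG (h.trans (Embedding.comap g.toEmbedding G).isContained)
  calc copyCountThrough (cycleGraph 4) G u v ≤ (G.c4Completions u v).ncard :=
        copyCountThrough_cycleGraph_four_le u v
    _ ≤ 2 + (G.comap g).edgeSet.ncard := ncard_c4Completions_le hsep hK4.1.ne hg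
    _ ≤ 2 + ((n - 4) ^ 2 / 4 + 1) := by grw [hex _ hH]
    _ = 3 + (n - 4) ^ 2 / 4 := by ring
end
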